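/- Let H be a δ-hyperbolic geodesic metric space with basepoint o, X a finite nonempty subset of H with radius r = r(X), and c an ε-center of X for some ε > 0. Then |X| − r − ε ≤ |c| ≤ |X| − r + 4δ + ε. -/

import Mathlib

/-- The Gromov product `⟨x,y⟩_w`. -/
noncomputable def gromovProd {H : Type*} [MetricSpace H] (w x y : H) : ℝ :=
  (dist x w + dist y w - dist x y) / 2

/-- `f` is a unit-speed geodesic parametrization of a segment from `x` to `y`. -/
def IsGeodesicParam {H : Type*} [MetricSpace H] (x y : H) (f : ℝ → H) : Prop :=
  f 0 = x ∧ f (dist x y) = y ∧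
    ∀ s ∈ Set.Icc (0:ℝ) (dist x y), ∀ t ∈ Set.Icc (0:ℝ) (dist x y),
      dist (f s) (f t) = |s - t|

/-- A geodesic metric space: any two points are joined by a geodesic segment. -/
def IsGeodesicSpace (H : Type*) [MetricSpace H] : Prop :=
  ∀ x y : H, ∃ f : ℝ → H, IsGeodesicParam x y f

/-- All geodesic triangles are `δ`-thin. -/
def ThinTriangles (H : Type*) [MetricSpace H] (δ : ℝ) : Prop :=
  ∀ (r p q : H) (fp fq : ℝ → H), IsGeodesicParam r p fp → IsGeodesicParam r q fq →
    ∀ t ∈ Set.Icc (0:ℝ) (gromovProd r p q), dist (fp t) (fq t) ≤ δ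

/-- A `δ`-hyperbolic geodesic metric space. -/
def IsDeltaHyperbolic (H : Type*) [MetricSpace H] (δ : ℝ) : Prop :=
  IsGeodesicSpace H ∧ ThinTriangles H δ ∧
    ∀ w x y z : H, min (gromovProd w x y) (gromovProd w y z) - δ ≤ gromovProd w x z

/-- The radius of a bounded subset `X`: the infimum of radii of closed balls containing
`X`. -/
noncomputable def setRadius {H : Type*} [MetricSpace H] (X : Set H) : ℝ :=
  sInf {r : ℝ | ∃ c, X ⊆ Metric.closedBall c r}


/-!
Take a geodesic from `c` to `o` and the point `m` on it at the distance `s` from `c` for which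
the two bounds `d(x,c) ≤ r + ε` and `d(x,o) ≤ |X|` give the same estimate. By thinness of the
triangle with vertices `c`, `o`, `x`, every `x ∈ X` lies within `(r + ε + |X| - |c|)/2 + δ` of `m`,
and this radius is at least `r`. The lower bound is the triangle inequality.
-/

open Set Metric

variable {H : Type*} [MetricSpace H]

lemma gromovProd_le_dist_right (w x y : H) : gromovProd w x y ≤ dist y w := by
  unfold gromovProd
  linarith [dist_triangle x y w]

lemma gromovProd_add_gromovProd_swap (a b x : H) :
    gromovProd a b x + gromovProd b a x = dist a b := by
  unfold gromovProd
  linarith [dist_comm a b, dist_comm a x, dist_comm b x]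

lemma setRadius_le {X : Set H} (hX : X.Nonempty) {c : H} {R : ℝ} (h : X ⊆ closedBall c R) :
    setRadius X ≤ R := by
  obtain ⟨x, hx⟩ := hX
  refine csInf_le ⟨0, ?_⟩ ⟨c, h⟩
  rintro R' ⟨c', hc'⟩
  exact dist_nonneg.trans (mem_closedBall.mp (hc' hx))

namespace IsGeodesicParam

variable {x y : H} {f : ℝ → H} {t : ℝ}

lemma const (x : H) : IsGeodesicParam x x (fun _ => x) := by
  refine ⟨rfl, rfl, ?_⟩
  simp

lemma symm (hf : IsGeodesicParam x y f) : IsGeodesicParam y x (fun t => f (dist x y - t)) := by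
  obtain ⟨h0, h1, hd⟩ := hf
  refine ⟨by simpa using h1, by simpa [dist_comm] using h0, ?_⟩
  rintro s ⟨hs0, hs1⟩ t ⟨ht0, ht1⟩
  rw [dist_comm y x] at hs1 ht1
  rw [hd _ ⟨by linarith, by linarith⟩ _ ⟨by linarith, by linarith⟩, abs_sub_comm]
  ring_nf

lemma dist_apply_right (hf : IsGeodesicParam x y f) (ht : t ∈ Icc 0 (dist x y)) :
    dist (f t) y = dist x y - t := by
  conv_lhs => rw [← hf.2.1]
  rw [hf.2.2 t ht _ ⟨dist_nonneg, le_rfl⟩, abs_sub_comm, abs_of_nonneg (by linarith [ht.2])]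

end IsGeodesicParam

namespace ThinTriangles

variable {δ : ℝ} {a b : H} {f : ℝ → H} {t : ℝ}

lemma nonneg (hthin : ThinTriangles H δ) (x : H) : 0 ≤ δ := by
  have hg := IsGeodesicParam.const x
  simpa using hthin x x x _ _ hg hg 0 ⟨le_rfl, by simp [gromovProd]⟩

lemma dist_apply_le_of_le_gromovProd (hgeo : IsGeodesicSpace H) (hthin : ThinTriangles H δ)
    (hf : IsGeodesicParam a b f) (x : H) (ht : t ∈ Icc 0 (gromovProd a b x)) :
    dist x (f t) ≤ dist x a - t + δ := by
  obtain ⟨g, hg⟩ := hgeo a x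
  have hclose : dist (f t) (g t) ≤ δ := hthin a b x f g hf hg t ht
  have hta : t ≤ dist a x := dist_comm x a ▸ ht.2.trans (gromovProd_le_dist_right a b x)
  have hgx : dist (g t) x = dist a x - t := hg.dist_apply_right ⟨ht.1, hta⟩
  calc dist x (f t) ≤ dist x (g t) + dist (g t) (f t) := dist_triangle _ _ _
    _ = dist x a - t + dist (f t) (g t) := by rw [dist_comm x, hgx, dist_comm a, dist_comm (g t)]
    _ ≤ dist x a - t + δ := by gcongr

lemma dist_apply_le_max (hgeo : IsGeodesicSpace H) (hthin : ThinTriangles H δ)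
    (hf : IsGeodesicParam a b f) (x : H) (ht : t ∈ Icc 0 (dist a b)) :
    dist x (f t) ≤ max (dist x a - t) (dist x b - (dist a b - t)) + δ := by
  rcases le_or_gt t (gromovProd a b x) with hle | hlt
  · exact (hthin.dist_apply_le_of_le_gromovProd hgeo hf x ⟨ht.1, hle⟩).trans
      (add_le_add_left (le_max_left _ _) _)
  · -- beyond `⟨b, x⟩_a` the point is inside the thin part of the triangle seen from `b`
    have hsum := gromovProd_add_gromovProd_swap a b x
    have h := hthin.dist_apply_le_of_le_gromovProd hgeo hf.symm x (t := dist a b - t)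
      ⟨by linarith [ht.2], by linarith⟩
    rw [sub_sub_cancel] at h
    exact h.trans (add_le_add_left (le_max_right _ _) _)

lemma exists_inter_closedBall_subset_closedBall (hgeo : IsGeodesicSpace H)
    (hthin : ThinTriangles H δ) (a b : H) (R M : ℝ) :
    ∃ m, closedBall a R ∩ closedBall b M ⊆ closedBall m ((R + M - dist a b) / 2 + δ) := by
  have hδ := hthin.nonneg a
  -- `s` balances the two estimates: `R - s = M - (dist a b - s)`
  set s := (R - M + dist a b) / 2 with hs
  rcases lt_or_ge s 0 with hs0 | hs0
  · exact ⟨a, fun x hx => mem_closedBall.mpr (by linarith [mem_closedBall.mp hx.1])⟩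
  rcases lt_or_ge (dist a b) s with hsd | hsd
  · exact ⟨b, fun x hx => mem_closedBall.mpr (by linarith [mem_closedBall.mp hx.2])⟩
  obtain ⟨f, hf⟩ := hgeo a b
  refine ⟨f s, fun x ⟨hxa, hxb⟩ => mem_closedBall.mpr ?_⟩
  have hxa := mem_closedBall.mp hxa
  have hxb := mem_closedBall.mp hxb
  refine (hthin.dist_apply_le_max hgeo hf x ⟨hs0, hsd⟩).trans (add_le_add_left ?_ _)
  exact max_le (by linarith) (by linarith)

end ThinTriangles

theorem dist_origin_to_center_general {H : Type} [MetricSpace H] (δ : ℝ)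
    (hhyp : IsDeltaHyperbolic H δ) (o : H)
    (X : Finset H) (hX : X.Nonempty)
    (ε : ℝ) (c : H)
    (hc : (X : Set H) ⊆ Metric.closedBall c (setRadius (X : Set H) + ε)) :
    X.sup' hX (fun p => dist p o) - setRadius (X : Set H) - ε ≤ dist c o ∧
    dist c o ≤ X.sup' hX (fun p => dist p o) - setRadius (X : Set H) + 4 * δ + ε := by
  obtain ⟨hgeo, hthin, -⟩ := hhyp
  set M := X.sup' hX (fun p => dist p o)
  set r := setRadius (X : Set H)
  have hXc : ∀ p ∈ X, dist p c ≤ r + ε := fun p hp => mem_closedBall.mp (hc hp)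
  have hXo : ∀ p ∈ X, dist p o ≤ M := fun p hp => X.le_sup' (fun p => dist p o) hp
  constructor
  · have : M ≤ r + ε + dist c o :=
      X.sup'_le _ _ fun p hp => (dist_triangle p c o).trans (by linarith [hXc p hp])
    linarith
  · obtain ⟨m, hm⟩ := hthin.exists_inter_closedBall_subset_closedBall hgeo c o (r + ε) M
    have hr : r ≤ (r + ε + M - dist c o) / 2 + δ :=
      setRadius_le (by exact_mod_cast hX) fun p hp =>
        hm ⟨hc hp, mem_closedBall.mpr (hXo p hp)⟩
    linarith [hthin.nonneg o]

/-- Lemma 2.4 (distance from origin to center): for a finite nonempty set `X` with radius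
`r` and `ε`-center `c`, one has `|X| − r − ε ≤ |c| ≤ |X| − r + 4δ + ε`. -/
theorem dist_origin_to_center {H : Type} [MetricSpace H] (δ : ℝ)
    (hhyp : IsDeltaHyperbolic H δ) (o : H)
    (X : Finset H) (hX : X.Nonempty)
    (ε : ℝ) (hε : 0 < ε) (c : H)
    (hc : (X : Set H) ⊆ Metric.closedBall c (setRadius (X : Set H) + ε)) :
    X.sup' hX (fun p => dist p o) - setRadius (X : Set H) - ε ≤ dist c o ∧
    dist c o ≤ X.sup' hX (fun p => dist p o) - setRadius (X : Set H) + 4 * δ + ε :=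
  dist_origin_to_center_general δ hhyp o X hX ε c hc
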